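/- Fix γ ∈ ℂ with κ := 2·Re(γ) ≠ 0, an integer n > 1, and vectors η₁, η₂ ∈ ℂⁿ with components η_{i1},…,η_{in}. For 1 ≤ k ≤ n let Γ_(k) be the k×k lower-triangular Jordan block with eigenvalue γ, let K_(k) be the same matrix with γ replaced by κ (which is invertible since κ ≠ 0), and let η_{i(k)} ∈ ℂᵏ be the vector of the first k components of η_i. Suppose Ω_(k) ∈ M_k(ℂ) is Hermitian and satisfies Γ_(k)·Ω_(k) + Ω_(k)·Γ_(k)ᴴ = η_{1(k)}·η_{1(k)}ᴴ + η_{2(k)}·η_{2(k)}ᴴ. Define e_k := (0,…,0,1)ᵀ ∈ ℂᵏ, B_{k+1} := K_(k)⁻¹·( η_{1(k)}·conj(η_{1,k+1}) + η_{2(k)}·conj(η_{2,k+1}) − Ω_(k)·e_k ) and ω_{k+1} := κ⁻¹·( |η_{1,k+1}|² + |η_{2,k+1}|² − 2·Re(e_kᵀ·B_{k+1}) ). Then the (k+1)×(k+1) block matrix Ω_(k+1) := [[Ω_(k), B_{k+1}],[B_{k+1}ᴴ, ω_{k+1}]] satisfies Γ_(k+1)·Ω_(k+1) + Ω_(k+1)·Γ_(k+1)ᴴ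 = η_{1(k+1)}·η_{1(k+1)}ᴴ + η_{2(k+1)}·η_{2(k+1)}ᴴ. -/

import Mathlib

open Matrix

/-- The k×k lower-triangular Jordan block with eigenvalue γ. -/
def jordanBlock (k : ℕ) (γ : ℂ) : Matrix (Fin k) (Fin k) ℂ :=
  Matrix.of fun i j => if (i : ℕ) = (j : ℕ) then γ
    else if (i : ℕ) = (j : ℕ) + 1 then 1 else 0

/-- The column vector of the first k components of η ∈ ℂⁿ. -/
def truncCol {n : ℕ} (k : ℕ) (h : k ≤ n) (η : Fin n → ℂ) :
    Matrix (Fin k) (Fin 1) ℂ :=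
  Matrix.of fun i _ => η (Fin.castLE h i)

/-- The column vector (0,…,0,1)ᵀ ∈ ℂᵏ. -/
def lastUnit (k : ℕ) : Matrix (Fin k) (Fin 1) ℂ :=
  Matrix.of fun i _ => if (i : ℕ) + 1 = k then 1 else 0

lemma mul_of_one {m : ℕ} (M : Matrix (Fin m) (Fin 1) ℂ) (a : ℂ) :
    M * (Matrix.of (fun _ _ => a) : Matrix (Fin 1) (Fin 1) ℂ) = a • M := by
  ext i j
  rw [Subsingleton.elim j 0]
  simp [Matrix.mul_apply, Fin.sum_univ_one, mul_comm]

lemma of_one_mul {m : ℕ} (M : Matrix (Fin 1) (Fin m) ℂ) (a : ℂ) :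
    (Matrix.of (fun _ _ => a) : Matrix (Fin 1) (Fin 1) ℂ) * M = a • M := by
  ext i j
  rw [Subsingleton.elim i 0]
  simp [Matrix.mul_apply, Fin.sum_univ_one]

lemma of_one_mul_of_one (a b : ℂ) :
    Matrix.of (fun _ _ => a) * (Matrix.of (fun _ _ => b) : Matrix (Fin 1) (Fin 1) ℂ)
      = Matrix.of (fun _ _ => a * b) := by
  ext i j
  simp [Matrix.mul_apply, Fin.sum_univ_one]

lemma of_one_conj (a : ℂ) :
    (Matrix.of (fun _ _ => a) : Matrix (Fin 1) (Fin 1) ℂ)ᴴ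
      = Matrix.of (fun _ _ => (starRingEnd ℂ) a) := by
  ext i j
  simp [Matrix.conjTranspose_apply]

lemma lastUnit_t_conj (k : ℕ) : ((lastUnit k)ᵀ)ᴴ = lastUnit k := by
  ext i j
  simp [lastUnit, Matrix.conjTranspose_apply]

lemma lastUnit_conj (k : ℕ) : (lastUnit k)ᴴ = (lastUnit k)ᵀ := by
  ext i j
  simp [lastUnit, Matrix.conjTranspose_apply]

lemma jordan_succ (k : ℕ) (γ : ℂ) :
    (jordanBlock (k+1) γ).submatrix finSumFinEquiv finSumFinEquiv
      = Matrix.fromBlocks (jordanBlock k γ) 0 (lastUnit k)ᵀ (Matrix.of fun _ _ => γ) := by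
  ext i j
  rcases i with i | i <;> rcases j with j | j <;>
      simp [jordanBlock, lastUnit, finSumFinEquiv_apply_left, finSumFinEquiv_apply_right,
        Matrix.fromBlocks] <;> (try (have h1 := i.isLt; have h2 := j.isLt; split_ifs <;> first | rfl | (exfalso; omega)))

lemma trunc_block {n : ℕ} (k : ℕ) (h : k + 1 ≤ n) (h' : k ≤ n) (η : Fin n → ℂ) :
    ((truncCol (k+1) h η) * (truncCol (k+1) h η)ᴴ).submatrix finSumFinEquiv finSumFinEquiv
      = Matrix.fromBlocks
          (truncCol k h' η * (truncCol k h' η)ᴴ)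
          ((starRingEnd ℂ) (η ⟨k, h⟩) • truncCol k h' η)
          ((η ⟨k, h⟩) • (truncCol k h' η)ᴴ)
          (Matrix.of fun _ _ => (Complex.normSq (η ⟨k, h⟩) : ℂ)) := by
  have e1 : ∀ i : Fin k, Fin.castLE h (Fin.castAdd 1 i) = Fin.castLE h' i := by
    intro i; ext; simp
  have e2 : ∀ j : Fin 1, Fin.castLE h (Fin.natAdd k j) = ⟨k, h⟩ := by
    intro j; ext; simp [Subsingleton.elim j 0]
  ext i j
  rcases i with i | i <;> rcases j with j | j <;>
    simp [truncCol, Matrix.mul_apply, Fin.sum_univ_one, Matrix.conjTranspose_apply,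
      e1, e2, Complex.normSq_eq_conj_mul_self, mul_comm]

lemma jordan_det (k : ℕ) (a : ℂ) : (jordanBlock k a).det = a ^ k := by
  rw [Matrix.det_of_lowerTriangular]
  · simp [jordanBlock]
  · intro i j hij
    simp only [jordanBlock, Matrix.of_apply]
    have : (i : ℕ) < (j : ℕ) := hij
    split_ifs <;> first | rfl | (exfalso; omega)

theorem stmt_5 (γ : ℂ) (κ : ℝ) (hκ : κ = 2 * γ.re) (hκ0 : κ ≠ 0)
    (n : ℕ) (hn : 1 < n) (η₁ η₂ : Fin n → ℂ)
    (k : ℕ) (hk1 : 1 ≤ k) (hkn : k + 1 ≤ n)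
    (Ωk : Matrix (Fin k) (Fin k) ℂ) (hherm : Ωkᴴ = Ωk)
    (hLyap : jordanBlock k γ * Ωk + Ωk * (jordanBlock k γ)ᴴ
        = truncCol k (by omega) η₁ * (truncCol k (by omega) η₁)ᴴ
          + truncCol k (by omega) η₂ * (truncCol k (by omega) η₂)ᴴ)
    (B : Matrix (Fin k) (Fin 1) ℂ)
    (hB : B = (jordanBlock k (κ : ℂ))⁻¹ *
        ((starRingEnd ℂ) (η₁ ⟨k, by omega⟩) • truncCol k (by omega) η₁
          + (starRingEnd ℂ) (η₂ ⟨k, by omega⟩) • truncCol k (by omega) η₂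
          - Ωk * lastUnit k))
    (ω : ℝ)
    (hω : ω = κ⁻¹ * (Complex.normSq (η₁ ⟨k, by omega⟩)
        + Complex.normSq (η₂ ⟨k, by omega⟩)
        - 2 * (((lastUnit k)ᵀ * B) 0 0).re))
    (Ωnext : Matrix (Fin (k + 1)) (Fin (k + 1)) ℂ)
    (hΩnext : Ωnext = Matrix.reindex finSumFinEquiv finSumFinEquiv
        (Matrix.fromBlocks Ωk B Bᴴ (Matrix.of fun _ _ => (ω : ℂ)))) :
    jordanBlock (k + 1) γ * Ωnext + Ωnext * (jordanBlock (k + 1) γ)ᴴ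
      = truncCol (k + 1) (by omega) η₁ * (truncCol (k + 1) (by omega) η₁)ᴴ
        + truncCol (k + 1) (by omega) η₂ * (truncCol (k + 1) (by omega) η₂)ᴴ := by
  have hk' : k ≤ n := by omega
  have hκc : (κ : ℂ) ≠ 0 := Complex.ofReal_ne_zero.mpr hκ0
  have hκγ : (κ : ℂ) = γ + (starRingEnd ℂ) γ := by
    rw [hκ]
    push_cast
    rw [Complex.add_conj]
    push_cast
    ring
  set c1 := η₁ (⟨k, by omega⟩ : Fin n) with hc1
  set c2 := η₂ (⟨k, by omega⟩ : Fin n) with hc2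
  set v1 := truncCol k hk' η₁ with hv1
  set v2 := truncCol k hk' η₂ with hv2
  -- K·B = W
  have hKdec : jordanBlock k ((κ:ℝ) : ℂ)
      = jordanBlock k γ + (starRingEnd ℂ) γ • (1 : Matrix (Fin k) (Fin k) ℂ) := by
    ext i j
    simp only [jordanBlock, Matrix.of_apply, Matrix.add_apply, Matrix.smul_apply,
      Matrix.one_apply]
    by_cases hij : (i:ℕ) = (j:ℕ)
    · have : i = j := Fin.ext hij
      subst this
      simpa [hij] using hκγ
    · have hne : ¬ i = j := fun hh => hij (by rw [hh])
      simp [hij, hne]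
  have hdet : IsUnit (jordanBlock k ((κ:ℝ):ℂ)).det := by
    rw [jordan_det]; exact (pow_ne_zero _ hκc).isUnit
  have hKB : jordanBlock k ((κ:ℝ):ℂ) * B
      = (starRingEnd ℂ) c1 • v1 + (starRingEnd ℂ) c2 • v2 - Ωk * lastUnit k := by
    rw [hB, Matrix.mul_nonsing_inv_cancel_left _ _ hdet]
  -- block equation (1,2)
  have hE12 : jordanBlock k γ * B + (Ωk * lastUnit k + (starRingEnd ℂ) γ • B)
      = (starRingEnd ℂ) c1 • v1 + (starRingEnd ℂ) c2 • v2 := by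
    have h1 : jordanBlock k γ * B + (starRingEnd ℂ) γ • B = jordanBlock k ((κ:ℝ):ℂ) * B := by
      rw [hKdec, Matrix.add_mul, Matrix.smul_mul, Matrix.one_mul]
    calc jordanBlock k γ * B + (Ωk * lastUnit k + (starRingEnd ℂ) γ • B)
        = (jordanBlock k γ * B + (starRingEnd ℂ) γ • B) + Ωk * lastUnit k := by abel
      _ = ((starRingEnd ℂ) c1 • v1 + (starRingEnd ℂ) c2 • v2 - Ωk * lastUnit k)
            + Ωk * lastUnit k := by rw [h1, hKB]
      _ = _ := by abel
  -- block equation (2,1)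
  have hE21 : Bᴴ * (jordanBlock k γ)ᴴ + ((lastUnit k)ᵀ * Ωk + γ • Bᴴ)
      = c1 • v1ᴴ + c2 • v2ᴴ := by
    have := congrArg Matrix.conjTranspose hE12
    simp only [Matrix.conjTranspose_add, Matrix.conjTranspose_mul, Matrix.conjTranspose_smul,
      hherm, lastUnit_conj, RingHom.id_apply, starRingEnd_self_apply] at this
    convert this using 2 <;> simp [Complex.conj_conj]
  -- assemble
  have hsub : ∀ (M N : Matrix (Fin (k+1)) (Fin (k+1)) ℂ),
      M.submatrix finSumFinEquiv finSumFinEquiv = N.submatrix finSumFinEquiv finSumFinEquiv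
        → M = N := by
    intro M N hMN
    ext i j
    have h := congrFun (congrFun hMN (finSumFinEquiv.symm i)) (finSumFinEquiv.symm j)
    simpa using h
  apply hsub
  have hΩsub : Ωnext.submatrix finSumFinEquiv finSumFinEquiv
      = Matrix.fromBlocks Ωk B Bᴴ (Matrix.of fun _ _ => (ω:ℂ)) := by
    simp [hΩnext, Matrix.reindex_apply, Matrix.submatrix_submatrix]
  simp only [Matrix.submatrix_add, Pi.add_apply]
  rw [← Matrix.submatrix_mul_equiv (jordanBlock (k+1) γ) Ωnext _ finSumFinEquiv _,
    ← Matrix.submatrix_mul_equiv Ωnext ((jordanBlock (k+1) γ)ᴴ) _ finSumFinEquiv _,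
    ← Matrix.conjTranspose_submatrix, hΩsub, jordan_succ,
    trunc_block k hkn hk' η₁, trunc_block k hkn hk' η₂,
    Matrix.fromBlocks_conjTranspose, Matrix.fromBlocks_multiply, Matrix.fromBlocks_multiply,
    Matrix.fromBlocks_add, Matrix.fromBlocks_add, Matrix.fromBlocks_inj]
  rw [lastUnit_t_conj, of_one_conj]
  refine ⟨?_, ?_, ?_, ?_⟩
  · simpa using hLyap
  · simp only [Matrix.zero_mul, Matrix.mul_zero, add_zero, Matrix.conjTranspose_zero,
      mul_of_one]
    exact hE12
  · simp only [Matrix.zero_mul, Matrix.mul_zero, add_zero, Matrix.conjTranspose_zero,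
      of_one_mul]
    rw [← hE21]
    abel
  · -- scalar equation
    simp only [of_one_mul_of_one, mul_of_one, of_one_mul]
    have hBs : Bᴴ * lastUnit k = ((lastUnit k)ᵀ * B)ᴴ := by
      rw [Matrix.conjTranspose_mul, lastUnit_t_conj]
    rw [hBs]
    ext i j
    rw [Subsingleton.elim i 0, Subsingleton.elim j 0]
    simp only [Matrix.add_apply, Matrix.of_apply, Matrix.conjTranspose_apply,
      Matrix.smul_apply, smul_eq_mul, starRingEnd_apply]
    have hreal : 2 * (((lastUnit k)ᵀ * B) 0 0).re + κ * ω
        = Complex.normSq c1 + Complex.normSq c2 := by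
      rw [hω]; field_simp; try ring
    have hrealC : 2 * ((((lastUnit k)ᵀ * B) 0 0).re : ℂ) + (κ:ℂ) * (ω:ℂ)
        = (Complex.normSq c1 : ℂ) + (Complex.normSq c2 : ℂ) := by exact_mod_cast hreal
    have hconj : ((lastUnit k)ᵀ * B) 0 0 + star (((lastUnit k)ᵀ * B) 0 0)
        = 2 * ((((lastUnit k)ᵀ * B) 0 0).re : ℂ) := by
      simpa using Complex.add_conj (((lastUnit k)ᵀ * B) 0 0)
    have hκγ' : (κ:ℂ) = γ + star γ := hκγ
    linear_combination hrealC + hconj - (ω:ℂ) * hκγ'
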